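/- Deformation invariance of the modular commutator away from the middle region: let σ be a positive definite density matrix on H_a ⊗ H_A ⊗ H_B ⊗ H_C satisfying the quantum Markov identity K_{aAB}(σ) = K_{AB}(σ) + K_{aA}(σ) − K_A(σ) (with implicit identity extensions). Then J(Aa, B, C)_σ = J(A, B, C)_σ, where in J(Aa,B,C) the first subsystem is the union of the factors A and a. -/
import Mathlib


open scoped ComplexOrder

noncomputable section

namespace ModularCommutator

/-- Matrix logarithm of a Hermitian matrix, defined through the spectral theorem
(junk value `0` on non-Hermitian matrices). -/
noncomputable def mlog {n : Type} [Fintype n] [DecidableEq n] (M : Matrix n n ℂ) :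
    Matrix n n ℂ :=
  if h : M.IsHermitian then
    (h.eigenvectorUnitary : Matrix n n ℂ) *
      Matrix.diagonal (fun i => (Real.log (h.eigenvalues i) : ℂ)) *
      (star (h.eigenvectorUnitary : Matrix n n ℂ))
  else 0

/- The Hilbert space is `H_a ⊗ H_A ⊗ H_B ⊗ H_C`, with configurations
`(x.1, x.2.1, x.2.2.1, x.2.2.2) : a × A × B × C`. -/
variable {a A B C : Type} [Fintype a] [DecidableEq a] [Fintype A] [DecidableEq A]
  [Fintype B] [DecidableEq B] [Fintype C] [DecidableEq C]

/-- Partial trace onto `a ⊗ A ⊗ B`. -/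
def ptaAB (σ : Matrix (a × A × B × C) (a × A × B × C) ℂ) :
    Matrix (a × A × B) (a × A × B) ℂ :=
  fun p q => ∑ c : C, σ (p.1, p.2.1, p.2.2, c) (q.1, q.2.1, q.2.2, c)

/-- Partial trace onto `A ⊗ B`. -/
def ptAB (σ : Matrix (a × A × B × C) (a × A × B × C) ℂ) : Matrix (A × B) (A × B) ℂ :=
  fun p q => ∑ u : a, ∑ c : C, σ (u, p.1, p.2, c) (u, q.1, q.2, c)

/-- Partial trace onto `a ⊗ A`. -/
def ptaA (σ : Matrix (a × A × B × C) (a × A × B × C) ℂ) : Matrix (a × A) (a × A) ℂ :=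
  fun p q => ∑ b : B, ∑ c : C, σ (p.1, p.2, b, c) (q.1, q.2, b, c)

/-- Partial trace onto `A`. -/
def ptA (σ : Matrix (a × A × B × C) (a × A × B × C) ℂ) : Matrix A A ℂ :=
  fun x y => ∑ u : a, ∑ b : B, ∑ c : C, σ (u, x, b, c) (u, y, b, c)

/-- Partial trace onto `B ⊗ C`. -/
def ptBC (σ : Matrix (a × A × B × C) (a × A × B × C) ℂ) : Matrix (B × C) (B × C) ℂ :=
  fun p q => ∑ u : a, ∑ x : A, σ (u, x, p.1, p.2) (u, x, q.1, q.2)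

/-- Extension of an operator on `a ⊗ A ⊗ B` by the identity on `C`. -/
def embaAB (M : Matrix (a × A × B) (a × A × B) ℂ) :
    Matrix (a × A × B × C) (a × A × B × C) ℂ :=
  fun x y => if x.2.2.2 = y.2.2.2 then
    M (x.1, x.2.1, x.2.2.1) (y.1, y.2.1, y.2.2.1) else 0

/-- Extension of an operator on `A ⊗ B` by the identity on `a ⊗ C`. -/
def embAB (M : Matrix (A × B) (A × B) ℂ) :
    Matrix (a × A × B × C) (a × A × B × C) ℂ :=
  fun x y => if x.1 = y.1 ∧ x.2.2.2 = y.2.2.2 then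
    M (x.2.1, x.2.2.1) (y.2.1, y.2.2.1) else 0

/-- Extension of an operator on `a ⊗ A` by the identity on `B ⊗ C`. -/
def embaA (M : Matrix (a × A) (a × A) ℂ) :
    Matrix (a × A × B × C) (a × A × B × C) ℂ :=
  fun x y => if x.2.2 = y.2.2 then M (x.1, x.2.1) (y.1, y.2.1) else 0

/-- Extension of an operator on `A` by the identity on `a ⊗ B ⊗ C`. -/
def embA (M : Matrix A A ℂ) : Matrix (a × A × B × C) (a × A × B × C) ℂ :=
  fun x y => if x.1 = y.1 ∧ x.2.2 = y.2.2 then M x.2.1 y.2.1 else 0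

/-- Extension of an operator on `B ⊗ C` by the identity on `a ⊗ A`. -/
def embBC (M : Matrix (B × C) (B × C) ℂ) :
    Matrix (a × A × B × C) (a × A × B × C) ℂ :=
  fun x y => if x.1 = y.1 ∧ x.2.1 = y.2.1 then M x.2.2 y.2.2 else 0


lemma embaA_comm_embBC {a A B C : Type} [Fintype a] [DecidableEq a] [Fintype A]
    [DecidableEq A] [Fintype B] [DecidableEq B] [Fintype C] [DecidableEq C]
    (M : Matrix (a × A) (a × A) ℂ) (N : Matrix (B × C) (B × C) ℂ) :
    (embaA M : Matrix (a × A × B × C) (a × A × B × C) ℂ) * embBC N =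
      embBC N * embaA M := by
  ext ⟨x1, x2, x3, x4⟩ ⟨z1, z2, z3, z4⟩
  simp only [Matrix.mul_apply, embaA, embBC, Fintype.sum_prod_type, Prod.ext_iff]
  simp [ite_and, Finset.sum_ite_eq, Finset.sum_ite_eq', mul_comm]

lemma embA_comm_embBC {a A B C : Type} [Fintype a] [DecidableEq a] [Fintype A]
    [DecidableEq A] [Fintype B] [DecidableEq B] [Fintype C] [DecidableEq C]
    (M : Matrix A A ℂ) (N : Matrix (B × C) (B × C) ℂ) :
    (embA M : Matrix (a × A × B × C) (a × A × B × C) ℂ) * embBC N =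
      embBC N * embA M := by
  ext ⟨x1, x2, x3, x4⟩ ⟨z1, z2, z3, z4⟩
  simp only [Matrix.mul_apply, embA, embBC, Fintype.sum_prod_type, Prod.ext_iff]
  simp [ite_and, Finset.sum_ite_eq, Finset.sum_ite_eq', mul_comm]

/-- Deformation invariance of the modular commutator away from
the middle region: let `σ` be a positive definite density matrix on
`H_a ⊗ H_A ⊗ H_B ⊗ H_C` satisfying the quantum Markov identity
`K_{aAB}(σ) = K_{AB}(σ) + K_{aA}(σ) − K_A(σ)` (with implicit identity
extensions). Then `J(Aa, B, C)_σ = J(A, B, C)_σ`, where in `J(Aa,B,C)` the first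
subsystem is the union of the factors `A` and `a`. -/
theorem modular_commutator_deformation_first_region
    (σ : Matrix (a × A × B × C) (a × A × B × C) ℂ)
    (hσ : σ.PosDef) (hTr : σ.trace = 1)
    (hMarkov : embaAB (-(mlog (ptaAB σ))) =
      embAB (-(mlog (ptAB σ))) + embaA (-(mlog (ptaA σ))) -
        (embA (-(mlog (ptA σ))) : Matrix (a × A × B × C) (a × A × B × C) ℂ)) :
    Complex.I * (σ * (embaAB (-(mlog (ptaAB σ))) * embBC (-(mlog (ptBC σ))) -
        embBC (-(mlog (ptBC σ))) * embaAB (-(mlog (ptaAB σ))))).trace =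
    Complex.I * (σ * (embAB (-(mlog (ptAB σ))) * embBC (-(mlog (ptBC σ))) -
        embBC (-(mlog (ptBC σ))) * embAB (-(mlog (ptAB σ))))).trace := by
  rw [hMarkov]
  congr 2
  set X := (embAB (-(mlog (ptAB σ))) : Matrix (a × A × B × C) (a × A × B × C) ℂ)
  set Y := (embaA (-(mlog (ptaA σ))) : Matrix (a × A × B × C) (a × A × B × C) ℂ)
  set Z := (embA (-(mlog (ptA σ))) : Matrix (a × A × B × C) (a × A × B × C) ℂ)
  set W := (embBC (-(mlog (ptBC σ))) : Matrix (a × A × B × C) (a × A × B × C) ℂ)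
  have h1 : Y * W = W * Y := embaA_comm_embBC _ _
  have h2 : Z * W = W * Z := embA_comm_embBC _ _
  have : (X + Y - Z) * W - W * (X + Y - Z) = X * W - W * X := by
    simp only [add_mul, sub_mul, mul_add, mul_sub, h1, h2]
    abel
  rw [this]


end ModularCommutator
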